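/- The function f̂(u) = Σ_{i=1}^d β_i log(p_i(u)) (logit stick-breaking parametrization) is not strongly convex: for every α > 0 and every nonzero δ ∈ ℝ^{d-1}, there exists u ∈ ℝ^{d-1} such that ⟨δ, ∇f̂(u) − ∇f̂(u−δ)⟩ < α‖δ‖². -/

import Mathlib

/-!
A Lipschitz function has bounded gradient, while the hypothetical strong-convexity inequality,
summed along the ray `u = n • δ`, forces `⟪δ, ∇f̂ (n • δ)⟫` to grow linearly in `n`.
And `f̂` is Lipschitz: `log σ` is `1`-Lipschitz, `1 - σ t = σ (-t)`, and every `log pₖ` is a sum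
of terms `log σ (± uᵢ)`.
-/

open Finset Real RealInnerProductSpace NNReal

lemma LipschitzWith.finset_sum {ι α E : Type*} [PseudoEMetricSpace α] [SeminormedAddCommGroup E]
    (s : Finset ι) {f : ι → α → E} {K : ι → ℝ≥0} (h : ∀ i ∈ s, LipschitzWith (K i) (f i)) :
    LipschitzWith (∑ i ∈ s, K i) (fun x => ∑ i ∈ s, f i x) := by
  induction s using Finset.cons_induction with
  | empty => simpa using LipschitzWith.const (0 : E)
  | cons a s _ ih =>
    simp only [Finset.sum_cons]
    exact (h a (mem_cons_self a s)).add (ih fun i hi => h i (mem_cons_of_mem hi))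

lemma EuclideanSpace.lipschitzWith_apply {ι : Type*} [Fintype ι] (i : ι) :
    LipschitzWith 1 (fun v : EuclideanSpace ℝ ι => v i) :=
  ((LipschitzWith.eval i).comp (PiLp.lipschitzWith_ofLp 2 _)).weaken (by simp)

lemma norm_gradient_le_of_lipschitzWith {E : Type*} [NormedAddCommGroup E]
    [InnerProductSpace ℝ E] [CompleteSpace E] {f : E → ℝ} {K : ℝ≥0} (hf : LipschitzWith K f)
    (x : E) : ‖gradient f x‖ ≤ K := by
  rw [gradient, LinearIsometryEquiv.norm_map]
  exact norm_fderiv_le_of_lipschitz ℝ hf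

lemma exists_inner_sub_lt_of_norm_le {E : Type*} [NormedAddCommGroup E] [InnerProductSpace ℝ E]
    {F : E → E} {C : ℝ} (hF : ∀ x, ‖F x‖ ≤ C) {α : ℝ} (hα : 0 < α) {δ : E} (hδ : δ ≠ 0) :
    ∃ u, ⟪δ, F u - F (u - δ)⟫ < α * ‖δ‖ ^ 2 := by
  by_contra! hstrong
  have hgap : 0 < α * ‖δ‖ ^ 2 := by have := norm_pos_iff.mpr hδ; positivity
  obtain ⟨n, hn⟩ := exists_nat_gt (2 * ‖δ‖ * C / (α * ‖δ‖ ^ 2))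
  rw [div_lt_iff₀ hgap] at hn
  have hgrowth : n * (α * ‖δ‖ ^ 2) ≤ ⟪δ, F (n • δ) - F 0⟫ := by
    have htele := Finset.sum_range_sub (fun k : ℕ => ⟪δ, F (k • δ)⟫) n
    rw [zero_smul] at htele
    rw [inner_sub_right, ← htele]
    calc (n : ℝ) * (α * ‖δ‖ ^ 2) = ∑ _k ∈ range n, α * ‖δ‖ ^ 2 := by simp
      _ ≤ ∑ k ∈ range n, (⟪δ, F ((k + 1) • δ)⟫ - ⟪δ, F (k • δ)⟫) := by
        refine sum_le_sum fun k _ => ?_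
        simpa [← inner_sub_right, succ_nsmul] using hstrong ((k + 1) • δ)
  have hbound : ⟪δ, F (n • δ) - F 0⟫ ≤ 2 * ‖δ‖ * C :=
    calc ⟪δ, F (n • δ) - F 0⟫ ≤ ‖δ‖ * ‖F (n • δ) - F 0‖ := real_inner_le_norm _ _
      _ ≤ ‖δ‖ * (C + C) := by
        gcongr
        exact (norm_sub_le _ _).trans (add_le_add (hF _) (hF _))
      _ = 2 * ‖δ‖ * C := by ring
  linarith

lemma sigmoid_eq_exp_div (x : ℝ) : sigmoid x = exp x / (1 + exp x) := by
  rw [sigmoid_def, exp_neg]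
  field_simp
  ring

lemma lipschitzWith_log_sigmoid : LipschitzWith 1 (fun x => log (sigmoid x)) := by
  have hderiv (x : ℝ) : HasDerivAt (fun x => log (sigmoid x)) (1 - sigmoid x) x := by
    convert (hasDerivAt_sigmoid x).log (sigmoid_pos x).ne' using 1
    field_simp [(sigmoid_pos x).ne']
  refine lipschitzWith_of_nnnorm_deriv_le (fun x => (hderiv x).differentiableAt) fun x => ?_
  rw [(hderiv x).deriv, ← NNReal.coe_le_coe, coe_nnnorm, NNReal.coe_one, Real.norm_eq_abs,
    abs_le]
  constructor <;> linarith [sigmoid_pos x, sigmoid_lt_one x]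

noncomputable def stickBreaking (d : ℕ) (v : EuclideanSpace ℝ (Fin (d - 1))) (k : Fin d) : ℝ :=
  if h : (k : ℕ) < d - 1 then
    sigmoid (v ⟨k, h⟩) *
      ∏ i ∈ Finset.univ.filter (fun i : Fin (d - 1) => (i : ℕ) < (k : ℕ)), (1 - sigmoid (v i))
  else ∏ i : Fin (d - 1), (1 - sigmoid (v i))

lemma log_stickBreaking (d : ℕ) (v : EuclideanSpace ℝ (Fin (d - 1))) (k : Fin d) :
    log (stickBreaking d v k) =
      if h : (k : ℕ) < d - 1 then
        log (sigmoid (v ⟨k, h⟩)) +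
          ∑ i ∈ Finset.univ.filter (fun i : Fin (d - 1) => (i : ℕ) < (k : ℕ)), log (sigmoid (-v i))
      else ∑ i : Fin (d - 1), log (sigmoid (-v i)) := by
  have hlog_prod (s : Finset (Fin (d - 1))) :
      log (∏ i ∈ s, (1 - sigmoid (v i))) = ∑ i ∈ s, log (sigmoid (-v i)) := by
    simp_rw [← sigmoid_neg]
    exact log_prod fun i _ => (sigmoid_pos _).ne'
  unfold stickBreaking
  split_ifs
  · rw [log_mul (sigmoid_pos _).ne' (prod_pos fun i _ => by simp [← sigmoid_neg, sigmoid_pos]).ne',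
      hlog_prod]
  · exact hlog_prod _

lemma exists_lipschitzWith_log_stickBreaking (d : ℕ) (k : Fin d) :
    ∃ K, LipschitzWith K (fun v => log (stickBreaking d v k)) := by
  have hfactor (i : Fin (d - 1)) : LipschitzWith 1
      (fun v : EuclideanSpace ℝ (Fin (d - 1)) => log (sigmoid (-v i))) :=
    (lipschitzWith_log_sigmoid.comp
      (LipschitzWith.id.neg.comp (EuclideanSpace.lipschitzWith_apply i))).weaken (by simp)
  simp_rw [log_stickBreaking]
  by_cases h : (k : ℕ) < d - 1
  · simp only [dif_pos h]
    exact ⟨_, (lipschitzWith_log_sigmoid.comp (EuclideanSpace.lipschitzWith_apply _)).add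
      (LipschitzWith.finset_sum _ fun i _ => hfactor i)⟩
  · simp only [dif_neg h]
    exact ⟨_, LipschitzWith.finset_sum _ fun i _ => hfactor i⟩

theorem fhat_not_strongly_convex_general (d : ℕ) (β : Fin d → ℝ)
    (σ : ℝ → ℝ) (hσ : ∀ t, σ t = Real.exp t / (1 + Real.exp t))
    (p : EuclideanSpace ℝ (Fin (d - 1)) → Fin d → ℝ)
    (hp : ∀ v (k : Fin d), p v k =
      if h : (k : ℕ) < d - 1 then
        σ (v ⟨k, h⟩) *
          ∏ i ∈ Finset.univ.filter (fun i : Fin (d - 1) => (i : ℕ) < (k : ℕ)), (1 - σ (v i))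
      else ∏ i : Fin (d - 1), (1 - σ (v i)))
    (fhat : EuclideanSpace ℝ (Fin (d - 1)) → ℝ)
    (hfhat : ∀ v, fhat v = ∑ i : Fin d, β i * Real.log (p v i))
    (α : ℝ) (hα : 0 < α) (δ : EuclideanSpace ℝ (Fin (d - 1))) (hδ : δ ≠ 0) :
    ∃ u : EuclideanSpace ℝ (Fin (d - 1)),
      ⟪δ, gradient fhat u - gradient fhat (u - δ)⟫ < α * ‖δ‖ ^ 2 := by
  obtain rfl : σ = sigmoid := funext fun t => by rw [hσ, sigmoid_eq_exp_div]
  obtain rfl : p = stickBreaking d := funext fun v => funext (hp v)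
  obtain rfl : fhat = fun v => ∑ k, β k * log (stickBreaking d v k) := funext hfhat
  choose K hK using exists_lipschitzWith_log_stickBreaking d
  have hlip := LipschitzWith.finset_sum univ fun k _ => (lipschitzWith_smul (β k)).comp (hK k)
  exact exists_inner_sub_lt_of_norm_le (norm_gradient_le_of_lipschitzWith hlip) hα hδ

/-- f̂ is not strongly convex: for every α > 0 and nonzero δ there is u with
⟨δ, ∇f̂(u) − ∇f̂(u−δ)⟩ < α‖δ‖². -/
theorem fhat_not_strongly_convex (d : ℕ) (hd : 2 ≤ d) (β : Fin d → ℝ)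
    (σ : ℝ → ℝ) (hσ : ∀ t, σ t = Real.exp t / (1 + Real.exp t))
    (p : EuclideanSpace ℝ (Fin (d - 1)) → Fin d → ℝ)
    (hp : ∀ v (k : Fin d), p v k =
      if h : (k : ℕ) < d - 1 then
        σ (v ⟨k, h⟩) *
          ∏ i ∈ Finset.univ.filter (fun i : Fin (d - 1) => (i : ℕ) < (k : ℕ)), (1 - σ (v i))
      else ∏ i : Fin (d - 1), (1 - σ (v i)))
    (fhat : EuclideanSpace ℝ (Fin (d - 1)) → ℝ)
    (hfhat : ∀ v, fhat v = ∑ i : Fin d, β i * Real.log (p v i))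
    (α : ℝ) (hα : 0 < α) (δ : EuclideanSpace ℝ (Fin (d - 1))) (hδ : δ ≠ 0) :
    ∃ u : EuclideanSpace ℝ (Fin (d - 1)),
      ⟪δ, gradient fhat u - gradient fhat (u - δ)⟫ < α * ‖δ‖ ^ 2 :=
  fhat_not_strongly_convex_general d β σ hσ p hp fhat hfhat α hα δ hδ
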